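/- In the formal power series identity Σ_{n≥0} (zq;q²)_n zⁿ qⁿ/(−zq;q²)_{n+1} = Σ_{n≥0} (−1)ⁿ z^{2n} q^{2n(n+1)}, the right-hand side only involves even powers of z; equivalently, for each n the coefficient of z^{2m+1} in the left-hand side is 0 for all m. -/

import Mathlib

open PowerSeries

/-- The variable `q`, as a power series in `q` over `ℤ`. -/
noncomputable def qv : PowerSeries ℤ := PowerSeries.X

/-- The `n`-th summand `(zq;q²)_n zⁿ qⁿ/(−zq;q²)_{n+1}` of the left-hand side, as a formal
power series in `z` whose coefficients are formal power series in `q`. -/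
noncomputable def lhsTerm (n : ℕ) : PowerSeries (PowerSeries ℤ) :=
  (∏ j ∈ Finset.range n,
      (1 - PowerSeries.X * PowerSeries.C (R := PowerSeries ℤ) (qv ^ (2 * j + 1))))
    * PowerSeries.X ^ n * PowerSeries.C (R := PowerSeries ℤ) (qv ^ n)
    * Ring.inverse (∏ j ∈ Finset.range (n + 1),
        (1 + PowerSeries.X * PowerSeries.C (R := PowerSeries ℤ) (qv ^ (2 * j + 1))))

local notation "R" => PowerSeries ℤ
local notation "Cc" => @PowerSeries.C (PowerSeries ℤ) _

noncomputable def pm (k n : ℕ) : PowerSeries R :=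
  ∏ j ∈ Finset.range n, (1 - X * Cc (qv ^ (2*j + 2*k + 1)))
noncomputable def pp (k n : ℕ) : PowerSeries R :=
  ∏ j ∈ Finset.range n, (1 + X * Cc (qv ^ (2*j + 2*k + 1)))

lemma pp_isUnit (k n : ℕ) : IsUnit (pp k n) := by
  rw [PowerSeries.isUnit_iff_constantCoeff]; simp [pp]

lemma pm_succ (k n : ℕ) : pm k (n+1) = pm k n * (1 - X * Cc (qv ^ (2*n + 2*k + 1))) := by
  rw [pm, Finset.prod_range_succ]; rfl

lemma pp_succ (k n : ℕ) : pp k (n+1) = pp k n * (1 + X * Cc (qv ^ (2*n + 2*k + 1))) := by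
  rw [pp, Finset.prod_range_succ]; rfl

lemma pm_shift (k n : ℕ) : pm k (n+1) = pm (k+1) n * (1 - X * Cc (qv ^ (2*k + 1))) := by
  rw [pm, Finset.prod_range_succ',
    show (∏ j ∈ Finset.range n, (1 - X * Cc (qv ^ (2*(j+1) + 2*k + 1)))) = pm (k+1) n from
      Finset.prod_congr rfl fun j _ => by
        rw [show 2*(j+1) + 2*k + 1 = 2*j + 2*(k+1) + 1 by ring],
    show 2*0 + 2*k + 1 = 2*k + 1 by ring]

lemma pp_shift (k n : ℕ) : pp k (n+1) = pp (k+1) n * (1 + X * Cc (qv ^ (2*k + 1))) := by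
  rw [pp, Finset.prod_range_succ',
    show (∏ j ∈ Finset.range n, (1 + X * Cc (qv ^ (2*(j+1) + 2*k + 1)))) = pp (k+1) n from
      Finset.prod_congr rfl fun j _ => by
        rw [show 2*(j+1) + 2*k + 1 = 2*j + 2*(k+1) + 1 by ring],
    show 2*0 + 2*k + 1 = 2*k + 1 by ring]

/-- `aT n = lhsTerm n (z q²)`. -/
noncomputable def aT (n : ℕ) : PowerSeries R :=
  pm 1 n * X ^ n * Cc (qv ^ (3*n)) * Ring.inverse (pp 1 (n+1))

/-- remainder term -/
noncomputable def gT (n : ℕ) : PowerSeries R :=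
  X ^ (n+1) * Cc (qv ^ (n+1)) * pm 1 n * Ring.inverse (pp 0 (n+1))

lemma lhsTerm_eq (n : ℕ) :
    lhsTerm n = pm 0 n * X^n * Cc (qv^n) * Ring.inverse (pp 0 (n+1)) := rfl

lemma inv_factor {u v : PowerSeries R} (hu : IsUnit u) (hv : IsUnit v) :
    Ring.inverse u = v * Ring.inverse (u * v) := by
  rw [Ring.eq_mul_inverse_iff_mul_eq _ _ _ (hu.mul hv), ← mul_assoc,
    Ring.inverse_mul_cancel _ hu, one_mul]

lemma one_plus_isUnit (e : ℕ) : IsUnit (1 + X * Cc (qv ^ e)) := by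
  rw [PowerSeries.isUnit_iff_constantCoeff]; simp

/-- the telescoping identity -/
lemma gT_step (n : ℕ) :
    gT n = gT (n+1) + lhsTerm (n+1) + X^2 * Cc (qv^4) * aT n := by
  have hInv1 : Ring.inverse (pp 0 (n+1))
      = (1 + X * Cc (qv ^ (2*(n+1) + 2*0 + 1))) * Ring.inverse (pp 0 (n+1+1)) := by
    rw [inv_factor (pp_isUnit 0 (n+1)) (one_plus_isUnit _), ← pp_succ]
  have hInv2 : Ring.inverse (pp 1 (n+1))
      = (1 + X * Cc (qv ^ (2*0 + 1))) * Ring.inverse (pp 0 (n+1+1)) := by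
    rw [inv_factor (pp_isUnit 1 (n+1)) (one_plus_isUnit _), ← pp_shift]
  rw [gT, gT, lhsTerm_eq, aT, hInv1, hInv2, pm_succ 1 n, pm_shift 0 n]
  simp only [map_pow]
  ring

lemma key_sum (N : ℕ) :
    (∑ n ∈ Finset.range (N+1), lhsTerm n)
      + X^2 * Cc (qv^4) * (∑ n ∈ Finset.range N, aT n) + gT N = 1 := by
  induction N with
  | zero =>
      have hp : pp 0 1 = 1 + X * Cc qv := by
        rw [pp, Finset.prod_range_one]; norm_num
      have key : (pp 0 1) * Ring.inverse (pp 0 1) = 1 :=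
        Ring.mul_inverse_cancel _ (pp_isUnit 0 1)
      rw [Finset.sum_range_one, Finset.sum_range_zero, lhsTerm_eq, gT,
        show pm 0 0 = 1 from by rw [pm]; exact Finset.prod_range_zero _,
        show pm 1 0 = 1 from by rw [pm]; exact Finset.prod_range_zero _]
      simp only [map_pow]
      linear_combination key - Ring.inverse (pp 0 1) * hp
  | succ N ih =>
      rw [Finset.sum_range_succ, Finset.sum_range_succ (f := aT)]
      linear_combination ih - gT_step N

lemma coeff_lhsTerm_eq_zero {d n : ℕ} (h : d < n) :
    (coeff d) (lhsTerm n) = 0 := by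
  have he : lhsTerm n = X^n * (pm 0 n * Cc (qv^n) * Ring.inverse (pp 0 (n+1))) := by
    rw [lhsTerm_eq]; ring
  rw [he, coeff_X_pow_mul', if_neg (by omega)]

lemma coeff_gT_eq_zero {d n : ℕ} (h : d < n + 1) :
    (coeff d) (gT n) = 0 := by
  have he : gT n = X^(n+1) * (Cc (qv^(n+1)) * pm 1 n * Ring.inverse (pp 0 (n+1))) := by
    rw [gT]; ring
  rw [he, coeff_X_pow_mul', if_neg (by omega)]

lemma ringHom_inverse (f : PowerSeries R →+* PowerSeries R) {a : PowerSeries R}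
    (h : IsUnit a) : f (Ring.inverse a) = Ring.inverse (f a) := by
  obtain ⟨u, rfl⟩ := h
  rw [Ring.inverse_unit,
    show f ↑u = ↑(Units.map (f : PowerSeries R →* PowerSeries R) u) from rfl,
    Ring.inverse_unit]
  exact (Units.coe_map_inv _ u).symm

lemma rescale_C_apply (a r : R) : rescale a (PowerSeries.C r) = PowerSeries.C r := by
  ext n
  rw [coeff_rescale]
  cases n with
  | zero => simp
  | succ n => simp [PowerSeries.coeff_C]

lemma aT_eq (n : ℕ) : aT n = rescale (qv^2) (lhsTerm n) := by
  have hpm : rescale (qv^2) (pm 0 n) = pm 1 n := by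
    rw [pm, pm, map_prod]
    refine Finset.prod_congr rfl fun j _ => ?_
    rw [map_sub, map_one, map_mul, rescale_X, rescale_C_apply,
      show PowerSeries.C (qv^2) * X * Cc (qv ^ (2*j + 2*0 + 1))
          = X * Cc (qv ^ (2*j + 2*1 + 1)) from by
        rw [mul_comm (PowerSeries.C (qv^2)) X, mul_assoc, ← map_mul, ← pow_add,
          show 2 + (2*j + 2*0 + 1) = 2*j + 2*1 + 1 by ring]]
  have hpp : rescale (qv^2) (pp 0 (n+1)) = pp 1 (n+1) := by
    rw [pp, pp, map_prod]
    refine Finset.prod_congr rfl fun j _ => ?_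
    rw [map_add, map_one, map_mul, rescale_X, rescale_C_apply,
      show PowerSeries.C (qv^2) * X * Cc (qv ^ (2*j + 2*0 + 1))
          = X * Cc (qv ^ (2*j + 2*1 + 1)) from by
        rw [mul_comm (PowerSeries.C (qv^2)) X, mul_assoc, ← map_mul, ← pow_add,
          show 2 + (2*j + 2*0 + 1) = 2*j + 2*1 + 1 by ring]]
  have hx : (rescale (qv^2)) (X ^ n) = PowerSeries.C (qv^(2*n)) * X^n := by
    rw [map_pow, rescale_X, mul_pow, ← map_pow, ← pow_mul]
  have hc : (Cc (qv^(3*n)) : PowerSeries R) = Cc (qv^(2*n)) * Cc (qv^n) := by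
    rw [← map_mul, ← pow_add, show 2*n + n = 3*n by ring]
  rw [lhsTerm_eq, aT, map_mul, map_mul, map_mul, hpm,
    ringHom_inverse _ (pp_isUnit 0 (n+1)), hpp, hx, rescale_C_apply, hc]
  ring

lemma coeff_aT (d n : ℕ) : (coeff d) (aT n) = (qv^2)^d * (coeff d) (lhsTerm n) := by
  rw [aT_eq, coeff_rescale]

lemma S_recur (m : ℕ) (hm : 1 ≤ m) :
    (∑ n ∈ Finset.range (m+1), (coeff m) (lhsTerm n))
      + (coeff m) (X^2 * Cc (qv^4) * (∑ n ∈ Finset.range (m+2), aT n)) = 0 := by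
  have h := congrArg (coeff m) (key_sum (m+2))
  rw [map_add, map_add, map_sum, coeff_one, if_neg (by omega),
    coeff_gT_eq_zero (by omega), Finset.sum_range_succ, Finset.sum_range_succ,
    coeff_lhsTerm_eq_zero (show m < m + 2 by omega),
    coeff_lhsTerm_eq_zero (show m < m + 1 by omega)] at h
  simpa using h

lemma S_vanish : ∀ k : ℕ, ∑ n ∈ Finset.range (2*k+1+1), (coeff (2*k+1)) (lhsTerm n) = 0 := by
  intro k
  induction k with
  | zero =>
      have h := S_recur 1 (by omega)
      rw [mul_assoc, coeff_X_pow_mul', if_neg (by omega)] at h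
      simpa using h
  | succ k ih =>
      have h := S_recur (2*k+3) (by omega)
      rw [mul_assoc, coeff_X_pow_mul', if_pos (by omega),
        show 2*k+3-2 = 2*k+1 by omega, coeff_C_mul, map_sum] at h
      simp_rw [coeff_aT] at h
      rw [← Finset.mul_sum] at h
      have hin : ∑ i ∈ Finset.range (2*k+3+2), (coeff (2*k+1)) (lhsTerm i) = 0 := by
        rw [show 2*k+3+2 = (2*k+1+1)+1+1+1 by omega,
          Finset.sum_range_succ, Finset.sum_range_succ, Finset.sum_range_succ,
          coeff_lhsTerm_eq_zero (show 2*k+1 < 2*k+1+1+1+1 by omega),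
          coeff_lhsTerm_eq_zero (show 2*k+1 < 2*k+1+1+1 by omega),
          coeff_lhsTerm_eq_zero (show 2*k+1 < 2*k+1+1 by omega), ih]
        ring
      rw [hin] at h
      rw [show (2:ℕ)*(k+1)+1 = 2*k+3 by omega]
      simpa using h

/-- In `Σ_{n≥0} (zq;q²)_n zⁿ qⁿ/(−zq;q²)_{n+1} = Σ_{n≥0} (−1)ⁿ z^{2n} q^{2n(n+1)}`
the right-hand side involves only even powers of `z`; equivalently, the coefficient of any odd
power `z^m` of the left-hand side vanishes.  (Since the `n`-th summand has `z`-order at least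
`n`, the coefficient of `z^m` of the left-hand side is the finite sum over `n ≤ m`.) -/
theorem stmt14 (m : ℕ) (hm : Odd m) :
    ∑ n ∈ Finset.range (m + 1), @PowerSeries.coeff (PowerSeries ℤ) _ m (lhsTerm n) = 0 := by
  obtain ⟨k, hk⟩ := hm
  subst hk
  exact S_vanish k
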